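/- Let A, B, C, D be points in the plane. If orient(A, B, C) · orient(A, B, D) < 0 and orient(C, D, A) · orient(C, D, B) < 0, then the closed segment from A to B and the closed segment from C to D have a common point. -/
import Mathlib


/-- The orientation function for three points of the plane `ℝ × ℝ`. -/
def orient (P Q R : ℝ × ℝ) : ℝ :=
  (Q.1 - P.1) * (R.2 - P.2) - (Q.2 - P.2) * (R.1 - P.1)

/-- The closed segment from `P` to `Q` in the plane. -/
def closedSegment (P Q : ℝ × ℝ) : Set (ℝ × ℝ) :=
  {X | ∃ t ∈ Set.Icc (0 : ℝ) 1, X = (1 - t) • P + t • Q}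

private lemma coord_eq {Δ t s a b c d u v : ℝ} (hΔ : Δ ≠ 0)
    (ht : Δ * t = u) (hs : Δ * s = -v)
    (h : Δ * a + u * (b - a) = Δ * c - v * (d - c)) :
    (1 - t) * a + t * b = (1 - s) * c + s * d := by
  apply mul_left_cancel₀ hΔ
  linear_combination h + (b - a) * ht - (d - c) * hs

/-- If both orientation products are strictly negative, then the two
closed segments have a common point. -/
theorem segments_intersect_of_orient_mul_neg (A B C D : ℝ × ℝ)
    (h₁ : orient A B C * orient A B D < 0)
    (h₂ : orient C D A * orient C D B < 0) :
    ∃ X, X ∈ closedSegment A B ∧ X ∈ closedSegment C D := by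
  set o1 := orient A B C with ho1
  set o2 := orient A B D with ho2
  set o3 := orient C D A with ho3
  set o4 := orient C D B with ho4
  have hΔ1 : (o3 - o4) ≠ 0 := by
    intro h
    have h34 : o3 = o4 := by linarith
    rw [h34] at h₂
    exact absurd h₂ (not_lt.2 (mul_self_nonneg o4))
  have hΔ2 : (o1 - o2) ≠ 0 := by
    intro h
    have h12 : o1 = o2 := by linarith
    rw [h12] at h₁
    exact absurd h₁ (not_lt.2 (mul_self_nonneg o2))
  have hd1 : (0:ℝ) < o3 - o4 ∨ o3 - o4 < 0 := hΔ1.lt_or_gt.symm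
  have hd2 : (0:ℝ) < o1 - o2 ∨ o1 - o2 < 0 := hΔ2.lt_or_gt.symm
  set t := o3 / (o3 - o4) with hts
  set s := o1 / (o1 - o2) with hss
  have ht0 : 0 ≤ t := by
    rw [hts, div_nonneg_iff]
    rcases hd1 with h | h
    · left; constructor <;> nlinarith
    · right; constructor <;> nlinarith
  have ht1 : t ≤ 1 := by
    rw [hts, div_le_one_iff]
    rcases hd1 with h | h
    · exact Or.inl ⟨h, by nlinarith⟩
    · exact Or.inr (Or.inr ⟨h, by nlinarith⟩)
  have hs0 : 0 ≤ s := by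
    rw [hss, div_nonneg_iff]
    rcases hd2 with h | h
    · left; constructor <;> nlinarith
    · right; constructor <;> nlinarith
  have hs1 : s ≤ 1 := by
    rw [hss, div_le_one_iff]
    rcases hd2 with h | h
    · exact Or.inl ⟨h, by nlinarith⟩
    · exact Or.inr (Or.inr ⟨h, by nlinarith⟩)
  have e1 : o3 - o4 = o2 - o1 := by simp only [ho1, ho2, ho3, ho4, orient]; ring
  have ht : (o3 - o4) * t = o3 := by
    rw [hts]; field_simp
  have hs : (o3 - o4) * s = -o1 := by
    rw [hss, e1]; field_simp; ring
  have k1 : (o3 - o4) * A.1 + o3 * (B.1 - A.1) = (o3 - o4) * C.1 - o1 * (D.1 - C.1) := by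
    simp only [ho1, ho3, ho4, orient]; ring
  have k2 : (o3 - o4) * A.2 + o3 * (B.2 - A.2) = (o3 - o4) * C.2 - o1 * (D.2 - C.2) := by
    simp only [ho1, ho3, ho4, orient]; ring
  refine ⟨(1 - t) • A + t • B, ⟨t, ⟨ht0, ht1⟩, rfl⟩, ⟨s, ⟨hs0, hs1⟩, ?_⟩⟩
  have fst := coord_eq hΔ1 ht hs k1
  have snd := coord_eq hΔ1 ht hs k2
  apply Prod.ext <;>
    simpa [Prod.smul_fst, Prod.smul_snd] using (by assumption : _)
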